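/- Let e be a constant vector in ℝ^{n+1} and Σ a hypersurface with unit normal ν. For the tangent vector field Z = ⟨ν,e⟩ x^T − ⟨x,ν⟩ e^T on Σ (where x^T, e^T denote tangential projections of the position vector x and of e), the tangential divergence satisfies div_Σ(Z) = n⟨ν,e⟩. -/

import Mathlib

/-!
The normal components of the two terms of `Z` cancel, so `Z(y) = ⟨ν,e⟩ y - ⟨y,ν⟩ e` and
`DZ(u) = ⟨Au,e⟩ x + ⟨ν,e⟩ u - (⟨u,ν⟩ + ⟨x,Au⟩) e` with `A = Dν(x)`. On the `n`-dimensional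
tangent space the identity has trace `n`, and by Parseval the two rank-one terms contribute
`⟨A e^T, x^T⟩ - ⟨A x^T, e^T⟩`, which vanishes because `A` takes values in `ν^⊥` (as `|ν| = 1`)
and is symmetric there.
-/

open scoped RealInnerProductSpace

variable {E : Type*} [NormedAddCommGroup E] [InnerProductSpace ℝ E]

def tangentialPart (ν v : E) : E := v - ⟪v, ν⟫ • ν

section Tangential

variable {ν : E}

theorem inner_tangentialPart_left (u v : E) :
    ⟪tangentialPart ν u, v⟫ = ⟪u, tangentialPart ν v⟫ := by
  simp only [tangentialPart, inner_sub_left, inner_sub_right, real_inner_smul_left,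
    real_inner_smul_right, real_inner_comm ν]
  ring

theorem inner_tangentialPart_normal (hν : ‖ν‖ = 1) (v : E) : ⟪tangentialPart ν v, ν⟫ = 0 := by
  simp [tangentialPart, inner_sub_left, real_inner_smul_left, hν]

theorem tangentialPart_eq_self {v : E} (hv : ⟪v, ν⟫ = 0) : tangentialPart ν v = v := by
  simp [tangentialPart, hv]

theorem inner_self_tangentialPart (hν : ‖ν‖ = 1) (v : E) :
    ⟪tangentialPart ν v, tangentialPart ν v⟫ = ⟪v, v⟫ - ⟪ν, v⟫ * ⟪v, ν⟫ := by
  rw [inner_tangentialPart_left, tangentialPart_eq_self (inner_tangentialPart_normal hν v),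
    tangentialPart, inner_sub_right, real_inner_smul_right, real_inner_comm v ν]

theorem inner_smul_tangentialPart_sub_inner_smul_tangentialPart (e y : E) :
    ⟪ν, e⟫ • tangentialPart ν y - ⟪y, ν⟫ • tangentialPart ν e = ⟪ν, e⟫ • y - ⟪y, ν⟫ • e := by
  simp only [tangentialPart, smul_sub, smul_smul, real_inner_comm e ν]
  module

variable {ι : Type*} [Fintype ι] (b : OrthonormalBasis ι ℝ E)

theorem OrthonormalBasis.sum_inner_tangentialPart_mul_inner (a c : E) :
    ∑ i, ⟪tangentialPart ν (b i), a⟫ * ⟪tangentialPart ν (b i), c⟫ =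
      ⟪tangentialPart ν a, tangentialPart ν c⟫ := by
  rw [← b.sum_inner_mul_inner]
  refine Finset.sum_congr rfl fun i _ => ?_
  rw [inner_tangentialPart_left, inner_tangentialPart_left, real_inner_comm (b i)]

theorem OrthonormalBasis.sum_inner_self_tangentialPart (hν : ‖ν‖ = 1) :
    ∑ i, ⟪tangentialPart ν (b i), tangentialPart ν (b i)⟫ = Fintype.card ι - 1 := by
  simp_rw [inner_self_tangentialPart hν, Finset.sum_sub_distrib, b.sum_inner_mul_inner,
    real_inner_self_eq_norm_sq, hν, b.orthonormal.1]
  simp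

noncomputable def OrthonormalBasis.tangentialTrace (ν : E) (L : E → E) : ℝ :=
  ∑ i, ⟪L (tangentialPart ν (b i)), tangentialPart ν (b i)⟫

variable {A : E → E}

theorem OrthonormalBasis.sum_inner_tangentialPart_mul_inner_of_symm (hν : ‖ν‖ = 1)
    (hAν : ∀ u, ⟪A u, ν⟫ = 0) (hA : ∀ u v, ⟪u, ν⟫ = 0 → ⟪v, ν⟫ = 0 → ⟪A u, v⟫ = ⟪A v, u⟫)
    (a c : E) :
    ∑ i, ⟪A (tangentialPart ν (b i)), a⟫ * ⟪tangentialPart ν (b i), c⟫ =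
      ⟪A (tangentialPart ν a), tangentialPart ν c⟫ := by
  have hswap : ∀ i, ⟪A (tangentialPart ν (b i)), a⟫ =
      ⟪tangentialPart ν (b i), A (tangentialPart ν a)⟫ := by
    intro i
    rw [← tangentialPart_eq_self (hAν (tangentialPart ν (b i))), inner_tangentialPart_left,
      hA _ _ (inner_tangentialPart_normal hν _) (inner_tangentialPart_normal hν _),
      real_inner_comm]
  simp_rw [hswap, b.sum_inner_tangentialPart_mul_inner, tangentialPart_eq_self (hAν _)]

theorem OrthonormalBasis.tangentialTrace_eq (hν : ‖ν‖ = 1) (hAν : ∀ u, ⟪A u, ν⟫ = 0)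
    (hA : ∀ u v, ⟪u, ν⟫ = 0 → ⟪v, ν⟫ = 0 → ⟪A u, v⟫ = ⟪A v, u⟫) (e x : E) :
    b.tangentialTrace ν (fun u => ⟪A u, e⟫ • x + ⟪ν, e⟫ • u - (⟪u, ν⟫ + ⟪x, A u⟫) • e) =
      (Fintype.card ι - 1) * ⟪ν, e⟫ := by
  have hsummand : ∀ u, ⟪u, ν⟫ = 0 →
      ⟪⟪A u, e⟫ • x + ⟪ν, e⟫ • u - (⟪u, ν⟫ + ⟪x, A u⟫) • e, u⟫ =
        ⟪A u, e⟫ * ⟪u, x⟫ + ⟪ν, e⟫ * ⟪u, u⟫ - ⟪A u, x⟫ * ⟪u, e⟫ := by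
    intro u hu
    simp only [inner_sub_left, inner_add_left, real_inner_smul_left, hu, real_inner_comm x,
      real_inner_comm e]
    ring
  simp only [OrthonormalBasis.tangentialTrace, hsummand _ (inner_tangentialPart_normal hν _),
    Finset.sum_sub_distrib, Finset.sum_add_distrib, ← Finset.mul_sum,
    b.sum_inner_tangentialPart_mul_inner_of_symm hν hAν hA, b.sum_inner_self_tangentialPart hν,
    hA _ _ (inner_tangentialPart_normal hν e) (inner_tangentialPart_normal hν x)]
  ring

end Tangential

theorem inner_fderiv_apply_eq_zero_of_norm_eq_one {F : Type*} [NormedAddCommGroup F]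
    [NormedSpace ℝ F] {ν : F → E} {x : F} (hν : ∀ y, ‖ν y‖ = 1) (hdiff : DifferentiableAt ℝ ν x)
    (u : F) : ⟪fderiv ℝ ν x u, ν x⟫ = 0 := by
  have hconst : HasFDerivAt (‖ν ·‖ ^ 2) (0 : F →L[ℝ] ℝ) x := by
    simpa [hν] using hasFDerivAt_const (1 : ℝ) x
  simpa [real_inner_comm] using congr($(hdiff.hasFDerivAt.norm_sq.unique hconst) u)

theorem fderiv_inner_smul_sub_inner_smul_apply {ν : E → E} {x : E}
    (hdiff : DifferentiableAt ℝ ν x) (e u : E) :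
    fderiv ℝ (fun y => ⟪ν y, e⟫ • y - ⟪y, ν y⟫ • e) x u =
      ⟪fderiv ℝ ν x u, e⟫ • x + ⟪ν x, e⟫ • u - (⟪u, ν x⟫ + ⟪x, fderiv ℝ ν x u⟫) • e := by
  have h : HasFDerivAt (fun y => ⟪ν y, e⟫ • y - ⟪y, ν y⟫ • e) _ x :=
    ((hdiff.hasFDerivAt.inner ℝ (hasFDerivAt_const e x)).smul (hasFDerivAt_id x)).sub
      (((hasFDerivAt_id x).inner ℝ hdiff.hasFDerivAt).smul_const e)
  rw [h.fderiv]
  simp [fderivInnerCLM_apply]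
  module

/-- For a hypersurface `Σ ⊂ ℝ^{n+1}` with unit normal (Gauss map) `ν` and a constant
vector `e`, the tangent field `Z = ⟨ν,e⟩ x^T − ⟨x,ν⟩ e^T` has tangential divergence
`div_Σ Z = n ⟨ν,e⟩`.  Here `v^T = v − ⟨v,ν⟩ν`, and the tangential divergence at `x`
is the trace of `P ∘ DZ ∘ P`, with `P` the orthogonal projection onto the tangent
space `ν(x)^⊥`; symmetry of the shape operator (Weingarten) is assumed. -/
theorem stmt1 (n : ℕ) (e : EuclideanSpace ℝ (Fin (n + 1)))
    (ν : EuclideanSpace ℝ (Fin (n + 1)) → EuclideanSpace ℝ (Fin (n + 1)))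
    (x : EuclideanSpace ℝ (Fin (n + 1)))
    (hν : ∀ y, ‖ν y‖ = 1)
    (hdiff : DifferentiableAt ℝ ν x)
    -- symmetry of the second fundamental form `h(X,Y) = ⟨∇̄_X ν, Y⟩` on tangent vectors
    (hsym : ∀ u v : EuclideanSpace ℝ (Fin (n + 1)),
      (inner ℝ u (ν x) : ℝ) = 0 → (inner ℝ v (ν x) : ℝ) = 0 →
      (inner ℝ ((fderiv ℝ ν x) u) v : ℝ) = (inner ℝ ((fderiv ℝ ν x) v) u : ℝ))
    -- the tangential projection at `x`
    (P : EuclideanSpace ℝ (Fin (n + 1)) → EuclideanSpace ℝ (Fin (n + 1)))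
    (hP : ∀ v, P v = v - (inner ℝ v (ν x) : ℝ) • ν x)
    -- the vector field `Z = ⟨ν,e⟩ x^T − ⟨x,ν⟩ e^T`
    (Z : EuclideanSpace ℝ (Fin (n + 1)) → EuclideanSpace ℝ (Fin (n + 1)))
    (hZ : ∀ y, Z y = (inner ℝ (ν y) e : ℝ) • (y - (inner ℝ y (ν y) : ℝ) • ν y)
      - (inner ℝ y (ν y) : ℝ) • (e - (inner ℝ e (ν y) : ℝ) • ν y)) :
    (∑ i, (inner ℝ ((fderiv ℝ Z x) (P (EuclideanSpace.single i 1)))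
        (P (EuclideanSpace.single i 1)) : ℝ))
      = n * (inner ℝ (ν x) e : ℝ) := by
  have hZ' : Z = fun y => ⟪ν y, e⟫ • y - ⟪y, ν y⟫ • e :=
    funext fun y => (hZ y).trans (inner_smul_tangentialPart_sub_inner_smul_tangentialPart e y)
  have hDZ : ⇑(fderiv ℝ Z x) = fun u =>
      ⟪fderiv ℝ ν x u, e⟫ • x + ⟪ν x, e⟫ • u - (⟪u, ν x⟫ + ⟪x, fderiv ℝ ν x u⟫) • e := by
    funext u
    rw [hZ', fderiv_inner_smul_sub_inner_smul_apply hdiff]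
  have htrace := (EuclideanSpace.basisFun (Fin (n + 1)) ℝ).tangentialTrace_eq (hν x)
    (inner_fderiv_apply_eq_zero_of_norm_eq_one hν hdiff) hsym e x
  rw [← hDZ, Fintype.card_fin, Nat.cast_add_one, add_sub_cancel_right] at htrace
  simpa [OrthonormalBasis.tangentialTrace, tangentialPart, ← hP] using htrace
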